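/- arXiv:2411.06083 — 2 statements merged into one kernel-verified Lean document; each statement's English description precedes it below -/
import Mathlib

section
/- For integers n ≥ 2, p ≥ 1, k ≥ 0 and m ≥ 0, one has z_n z_p^k ⋆_t z_p^m = Σ_{l=0}^{m} { z_p^l z_n + (1−2t) z_p^{l−1} z_{n+p} + (1 − δ_{k,0} δ_{m,l}) (t²−t) z_p^{l−1} x^{n+p} } (z_p^k ⋆_t z_p^{m−l}), where by convention z_p^{−1} = 0 (so the last two summands vanish when l = 0) and δ_{i,j} denotes the Kronecker delta. -/
/- ℍ_t = ℚ[t]⟨x,y⟩, z_k = x^{k-1}y, and the t-stuffle product ⋆_t on the word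
basis of ℍ¹_t (a ℚ[t]-bilinear map is determined by its values on words). -/

noncomputable section

open Polynomial Finset

abbrev R : Type := Polynomial ℚ
abbrev A : Type := FreeAlgebra R Bool

def Xg : A := FreeAlgebra.ι R false
def Yg : A := FreeAlgebra.ι R true
def tp : R := Polynomial.X

/-- `z k = x^(k-1) y`. -/
def z (k : ℕ) : A := Xg ^ (k - 1) * Yg

/-- The word `z_{k₁} ⋯ z_{kₙ}`. -/
def zw (w : List ℕ) : A := (w.map z).prod

/-- The t-stuffle product, given on the word basis of ℍ¹_t. -/
def tst : List ℕ → List ℕ → A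
  | [], w => zw w
  | k :: w₁, [] => zw (k :: w₁)
  | k :: w₁, l :: w₂ =>
      z k * tst w₁ (l :: w₂) + z l * tst (k :: w₁) w₂
        + (1 - 2 * tp) • (z (k + l) * tst w₁ w₂)
        + (if w₁ = [] ∧ w₂ = [] then (0 : R) else tp ^ 2 - tp) • (Xg ^ (k + l) * tst w₁ w₂)
  termination_by w₁ w₂ => w₁.length + w₂.length

lemma tst_nil_right (w : List ℕ) : tst w [] = zw w := by
  cases w <;> rw [tst]

lemma zw_nil : zw [] = 1 := rfl

lemma zw_cons (k : ℕ) (w : List ℕ) : zw (k :: w) = z k * zw w := by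
  simp [zw]

lemma tst_cons_cons (k l : ℕ) (w₁ w₂ : List ℕ) :
    tst (k :: w₁) (l :: w₂) =
      z k * tst w₁ (l :: w₂) + z l * tst (k :: w₁) w₂
        + (1 - 2 * tp) • (z (k + l) * tst w₁ w₂)
        + (if w₁ = [] ∧ w₂ = [] then (0 : R) else tp ^ 2 - tp) • (Xg ^ (k + l) * tst w₁ w₂) := by
  rw [tst]

/-- Lemma 3: for n ≥ 2, p ≥ 1, k ≥ 0, m ≥ 0,
`z_n z_p^k ⋆_t z_p^m = Σ_{l=0}^m {z_p^l z_n + (1-2t) z_p^{l-1} z_{n+p}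
  + (1-δ_{k,0}δ_{m,l})(t²-t) z_p^{l-1} x^{n+p}} (z_p^k ⋆_t z_p^{m-l})`,
with the convention `z_p^{-1} = 0` (so those summands vanish when l = 0). -/
theorem lemma3 (n p k m : ℕ) (hn : 2 ≤ n) (hp : 1 ≤ p) :
    tst (n :: List.replicate k p) (List.replicate m p) =
      ∑ l ∈ Finset.range (m + 1),
        (zw (List.replicate l p) * z n
          + (if l = 0 then (0 : A)
             else (1 - 2 * tp) • (zw (List.replicate (l - 1) p) * z (n + p)))
          + (if l = 0 then (0 : A)
             else (if k = 0 ∧ m = l then (0 : R) else tp ^ 2 - tp) •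
               (zw (List.replicate (l - 1) p) * Xg ^ (n + p))))
        * tst (List.replicate k p) (List.replicate (m - l) p) := by
  induction m with
  | zero =>
      simp [Finset.sum_range_one, tst_nil_right, zw_cons, zw]
  | succ m ih =>
      rw [List.replicate_succ, tst_cons_cons, Finset.sum_range_succ' _ (m + 1), ih]
      rw [Finset.mul_sum]
      have hterm : ∀ l ∈ Finset.range (m + 1),
          (zw (List.replicate (l + 1) p) * z n
            + (if l + 1 = 0 then (0 : A)
               else (1 - 2 * tp) • (zw (List.replicate (l + 1 - 1) p) * z (n + p)))
            + (if l + 1 = 0 then (0 : A)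
               else (if k = 0 ∧ m + 1 = l + 1 then (0 : R) else tp ^ 2 - tp) •
                 (zw (List.replicate (l + 1 - 1) p) * Xg ^ (n + p))))
          * tst (List.replicate k p) (List.replicate (m + 1 - (l + 1)) p)
          = z p * ((zw (List.replicate l p) * z n
            + (if l = 0 then (0 : A)
               else (1 - 2 * tp) • (zw (List.replicate (l - 1) p) * z (n + p)))
            + (if l = 0 then (0 : A)
               else (if k = 0 ∧ m = l then (0 : R) else tp ^ 2 - tp) •
                 (zw (List.replicate (l - 1) p) * Xg ^ (n + p))))
          * tst (List.replicate k p) (List.replicate (m - l) p))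
          + (if l = 0 then
              ((1 - 2 * tp) • (z (n + p) * tst (List.replicate k p) (List.replicate m p))
              + (if k = 0 ∧ m = 0 then (0 : R) else tp ^ 2 - tp) •
                  (Xg ^ (n + p) * tst (List.replicate k p) (List.replicate m p)))
             else 0) := by
        intro l _
        cases l with
        | zero =>
            simp [zw, List.replicate_succ, zw_cons, add_mul, smul_mul_assoc, mul_add,
              mul_smul_comm, mul_assoc]
            split_ifs <;> simp [add_assoc]
        | succ j =>
            have h1 : m + 1 - (j + 1 + 1) = m - (j + 1) := by omega
            have h2 : (m + 1 = j + 1 + 1) = (m = j + 1) := by simp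
            simp only [h1, h2, Nat.add_sub_cancel, Nat.succ_ne_zero, if_false,
              show List.replicate (j + 1 + 1) p = p :: List.replicate (j + 1) p from rfl,
              show List.replicate (j + 1) p = p :: List.replicate j p from rfl,
              zw_cons, mul_add, add_mul, mul_smul_comm, smul_mul_assoc, mul_assoc, add_zero]
      rw [Finset.sum_congr rfl hterm, Finset.sum_add_distrib, Finset.sum_ite_eq']
      rw [if_pos (by simp : (0 : ℕ) ∈ Finset.range (m + 1))]
      have hc : (List.replicate k p = [] ∧ List.replicate m p = []) = (k = 0 ∧ m = 0) := by
        simp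
      simp only [hc, Nat.sub_zero, List.replicate_zero, zw_nil, one_mul, if_true, add_zero,
        show List.replicate (m + 1) p = p :: List.replicate m p from rfl]
      abel
end
end

section
/- Let p ≥ 2 and k ≥ 0 be integers with k even. Then Σ_{m+n=k, m,n ≥ 0} (−1)^m ζ*({p}^m) ζ*({p}^n) = ζ*({2p}^{k/2}). -/
noncomputable section

open Finset

/-- The multiple zeta-star value `ζ*(k₁,…,kₙ)`, as a sum over weakly decreasing
tuples `m₁ ≥ m₂ ≥ ⋯ ≥ mₙ ≥ 1`; the empty index gives `ζ*() = 1`. -/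
def mzvStar (ks : List ℕ) : ℝ :=
  ∑' f : {f : Fin ks.length → ℕ //
      (∀ i j : Fin ks.length, i < j → f j ≤ f i) ∧ ∀ i, 1 ≤ f i},
    ∏ i, (1 : ℝ) / (f.1 i : ℝ) ^ ks.get i

def decSet (N m : ℕ) : Finset (Fin m → ℕ) :=
  (Fintype.piFinset fun _ => Finset.Icc 1 N).filter fun f => ∀ i j : Fin m, i < j → f j ≤ f i

def T (p N m : ℕ) : ℝ := ∑ f ∈ decSet N m, ∏ i, (1:ℝ) / (f i : ℝ) ^ p

lemma mem_decSet {N m : ℕ} {f : Fin m → ℕ} :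
    f ∈ decSet N m ↔ (∀ i, 1 ≤ f i ∧ f i ≤ N) ∧ ∀ i j : Fin m, i < j → f j ≤ f i := by
  simp [decSet, Fintype.mem_piFinset, Finset.mem_Icc, forall_and]

lemma T_zero (p N : ℕ) : T p N 0 = 1 := by simp [T, decSet]

lemma T_lvl_zero (p m : ℕ) : T p 0 (m+1) = 0 := by
  have h : decSet 0 (m+1) = ∅ := by
    ext f
    simp only [mem_decSet, Finset.notMem_empty, iff_false]
    rintro ⟨h1, -⟩
    have := (h1 0).1.trans (h1 0).2
    omega
  simp [T, h]

lemma T_rec (p N m : ℕ) :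
    T p (N+1) (m+1) = T p N (m+1) + (1:ℝ)/((N+1:ℕ):ℝ)^p * T p (N+1) m := by
  classical
  conv_lhs => rw [T]
  rw [← Finset.sum_filter_add_sum_filter_not (decSet (N+1) (m+1)) (fun f => f 0 = N+1),
    add_comm]
  congr 1
  · have h : (decSet (N+1) (m+1)).filter (fun f => ¬ f 0 = N+1) = decSet N (m+1) := by
      ext f
      simp only [Finset.mem_filter, mem_decSet]
      constructor
      · rintro ⟨⟨h1, h2⟩, h3⟩
        refine ⟨fun i => ⟨(h1 i).1, ?_⟩, h2⟩
        have hi0 : f i ≤ f 0 := by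
          rcases eq_or_ne i 0 with rfl | hi
          · exact le_refl _
          · exact h2 0 i (Fin.pos_of_ne_zero hi)
        have : f 0 ≤ N + 1 := (h1 0).2
        omega
      · rintro ⟨h1, h2⟩
        refine ⟨⟨fun i => ⟨(h1 i).1, (h1 i).2.trans (Nat.le_succ N)⟩, h2⟩, ?_⟩
        have := (h1 0).2
        omega
    rw [h, T]
  · rw [T, Finset.mul_sum]
    refine Finset.sum_nbij' (fun f => Fin.tail f) (fun g => Fin.cons (N+1) g) ?_ ?_ ?_ ?_ ?_
    · intro f hf
      simp only [Finset.mem_filter, mem_decSet] at hf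
      obtain ⟨⟨h1, h2⟩, h3⟩ := hf
      rw [mem_decSet]
      exact ⟨fun i => ⟨(h1 i.succ).1, (h1 i.succ).2⟩,
        fun i j hij => h2 i.succ j.succ (by simpa using hij)⟩
    · intro g hg
      rw [mem_decSet] at hg
      simp only [Finset.mem_filter, mem_decSet]
      refine ⟨⟨fun i => ?_, fun i j hij => ?_⟩, by simp⟩
      · rcases Fin.eq_zero_or_eq_succ i with rfl | ⟨i', rfl⟩
        · simp
        · simpa using ⟨(hg.1 i').1, (hg.1 i').2⟩
      · rcases Fin.eq_zero_or_eq_succ j with rfl | ⟨j', rfl⟩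
        · exact absurd hij (by simp [Fin.lt_iff_val_lt_val])
        · rcases Fin.eq_zero_or_eq_succ i with rfl | ⟨i', rfl⟩
          · exact (hg.1 j').2
          · exact hg.2 i' j' (by simpa [Fin.succ_lt_succ_iff] using hij)
    · intro f hf
      simp only [Finset.mem_filter] at hf
      have := (Fin.cons_self_tail f).symm
      rw [hf.2] at this
      exact this.symm
    · intro g hg
      exact Fin.tail_cons _ _
    · intro f hf
      simp only [Finset.mem_filter] at hf
      rw [Fin.prod_univ_succ, hf.2]
      rfl

/-! Algebraic part -/

/-- alternating convolution -/
def conv (a b : ℕ → ℝ) (k : ℕ) : ℝ :=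
  ∑ m ∈ Finset.range (k+1), (-1:ℝ)^m * a m * b (k - m)

lemma conv_odd_zero (a : ℕ → ℝ) {k : ℕ} (hk : Odd k) : conv a a k = 0 := by
  have h : conv a a k = - conv a a k := by
    conv_lhs => rw [conv,
      ← Finset.sum_range_reflect (fun m => (-1:ℝ)^m * a m * a (k - m)) (k+1)]
    rw [conv, ← Finset.sum_neg_distrib]
    refine Finset.sum_congr rfl ?_
    intro m hm
    simp only [Finset.mem_range] at hm
    have hm' : m ≤ k := by omega
    have h1 : k + 1 - 1 - m = k - m := by omega
    have h2 : k - (k - m) = m := by omega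
    rw [h1, h2]
    obtain ⟨j, hj⟩ := hk
    have hsign : (-1:ℝ)^(k-m) = -(-1:ℝ)^m := by
      rcases Nat.even_or_odd m with he | ho
      · obtain ⟨i, hi⟩ := id he
        have hodd : Odd (k - m) := ⟨j - i, by omega⟩
        rw [hodd.neg_one_pow, he.neg_one_pow]
      · obtain ⟨i, hi⟩ := id ho
        have heven : Even (k - m) := ⟨j - i, by omega⟩
        rw [heven.neg_one_pow, ho.neg_one_pow, neg_neg]
    rw [hsign]
    ring
  linarith

/-- expansion of convolution in the first argument -/
lemma conv_expand_left (a b c : ℕ → ℝ) (t : ℝ) (h0 : a 0 = b 0)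
    (hrec : ∀ m, a (m+1) = b (m+1) + t * a m) (k : ℕ) :
    conv a c (k+1) = conv b c (k+1) - t * conv a c k := by
  simp only [conv]
  rw [Finset.sum_range_succ', Finset.sum_range_succ' (n := k+1)
    (f := fun m => (-1:ℝ)^m * b m * c (k+1-m))]
  simp only [pow_succ, pow_zero, one_mul, Nat.sub_zero, h0, Nat.succ_sub_succ]
  rw [Finset.mul_sum, add_sub_right_comm, ← Finset.sum_sub_distrib]
  congr 1
  refine Finset.sum_congr rfl ?_
  intro m hm
  rw [hrec m]
  ring

/-- expansion of convolution in the second argument -/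
lemma conv_expand_right (a b c : ℕ → ℝ) (t : ℝ) (h0 : a 0 = b 0)
    (hrec : ∀ m, a (m+1) = b (m+1) + t * a m) (k : ℕ) :
    conv c a (k+1) = conv c b (k+1) + t * conv c a k := by
  simp only [conv]
  rw [Finset.sum_range_succ, Finset.sum_range_succ (n := k+1)
    (f := fun m => (-1:ℝ)^m * c m * b (k+1-m))]
  simp only [Nat.sub_self, h0]
  rw [Finset.mul_sum, add_right_comm, ← Finset.sum_add_distrib]
  congr 1
  refine Finset.sum_congr rfl ?_
  intro m hm
  simp only [Finset.mem_range] at hm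
  have h1 : k + 1 - m = (k - m) + 1 := by omega
  rw [h1, hrec (k - m)]
  ring

lemma conv_zero (x y : ℕ → ℝ) : conv x y 0 = x 0 * y 0 := by simp [conv]

lemma conv_T (p : ℕ) : ∀ N k, conv (T p N) (T p N) (2*k) = T (2*p) N k := by
  intro N
  induction N with
  | zero =>
    intro k
    cases k with
    | zero => simp [conv_zero, T_zero]
    | succ k =>
      rw [T_lvl_zero]
      rw [conv]
      refine Finset.sum_eq_zero ?_
      intro m hm
      simp only [Finset.mem_range] at hm
      rcases Nat.eq_zero_or_pos m with rfl | hmpos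
      · have : 2 * (k+1) - 0 = (2*k+1) + 1 := by omega
        rw [this, T_lvl_zero]
        ring
      · obtain ⟨m', rfl⟩ := Nat.exists_eq_succ_of_ne_zero (Nat.pos_iff_ne_zero.mp hmpos)
        rw [T_lvl_zero]
        ring
  | succ N ih =>
    set t : ℝ := (1:ℝ)/((N+1:ℕ):ℝ)^p with ht
    have h0 : T p (N+1) 0 = T p N 0 := by rw [T_zero, T_zero]
    have hrec : ∀ m, T p (N+1) (m+1) = T p N (m+1) + t * T p (N+1) m := fun m => T_rec p N m
    have hba : ∀ k, conv (T p N) (T p (N+1)) (2*k) = conv (T p (N+1)) (T p (N+1)) (2*k) := by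
      intro k
      cases k with
      | zero => simp [conv_zero, T_zero]
      | succ k =>
        have h2 : 2*(k+1) = (2*k+1)+1 := by omega
        rw [h2, conv_expand_left (T p (N+1)) (T p N) (T p (N+1)) t h0 hrec (2*k+1),
          conv_odd_zero _ ⟨k, by omega⟩]
        ring
    intro k
    induction k with
    | zero => simp [conv_zero, T_zero]
    | succ k ihk =>
      have h2 : 2*(k+1) = (2*k+1)+1 := by omega
      rw [h2, conv_expand_left (T p (N+1)) (T p N) (T p (N+1)) t h0 hrec (2*k+1),
        conv_odd_zero _ ⟨k, by omega⟩]
      rw [conv_expand_right (T p (N+1)) (T p N) (T p N) t h0 hrec (2*k+1),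
        conv_expand_right (T p (N+1)) (T p N) (T p N) t h0 hrec (2*k)]
      have e1 : conv (T p N) (T p N) (2*k+1+1) = T (2*p) N (k+1) := by
        have h4 : 2*k+1+1 = 2*(k+1) := by omega
        rw [h4, ih]
      have e2 : conv (T p N) (T p N) (2*k+1) = 0 := conv_odd_zero _ ⟨k, by omega⟩
      rw [e1, e2, hba k, ihk]
      have hT : T (2*p) (N+1) (k+1) = T (2*p) N (k+1) + (1:ℝ)/((N+1:ℕ):ℝ)^(2*p) * T (2*p) (N+1) k :=
        T_rec (2*p) N k
      rw [hT, ht]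
      have hpow : ((1:ℝ)/((N+1:ℕ):ℝ)^p) * ((1:ℝ)/((N+1:ℕ):ℝ)^p) = (1:ℝ)/((N+1:ℕ):ℝ)^(2*p) := by
        rw [div_mul_div_comm, one_mul, ← pow_add, two_mul]
      rw [← hpow]; ring

/-! Analytic part -/

/-- the subtype of admissible tuples -/
abbrev D (m : ℕ) := {f : Fin m → ℕ // (∀ i j : Fin m, i < j → f j ≤ f i) ∧ ∀ i, 1 ≤ f i}

lemma tsum_len (p n m : ℕ) (h : n = m) :
    (∑' f : D n, ∏ i, (1:ℝ) / (f.1 i : ℝ) ^ p)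
      = ∑' f : D m, ∏ i, (1:ℝ) / (f.1 i : ℝ) ^ p := by subst h; rfl

lemma mzvStar_replicate (p m : ℕ) :
    mzvStar (List.replicate m p) = ∑' f : D m, ∏ i, (1:ℝ) / (f.1 i : ℝ) ^ p := by
  rw [mzvStar]
  have step : (∑' f : D (List.replicate m p).length,
      ∏ i, (1:ℝ) / (f.1 i : ℝ) ^ ((List.replicate m p).get i))
      = ∑' f : D (List.replicate m p).length, ∏ i, (1:ℝ) / (f.1 i : ℝ) ^ p := by
    refine tsum_congr fun f => Finset.prod_congr rfl fun i _ => ?_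
    rw [List.get_eq_getElem, List.getElem_replicate]
  rw [step, tsum_len p _ m (List.length_replicate (n := m) (a := p))]

lemma summable_pi (p : ℕ) (hp : 2 ≤ p) :
    ∀ m, Summable (fun f : Fin m → ℕ => ∏ i, (1:ℝ) / (f i : ℝ) ^ p) := by
  intro m
  induction m with
  | zero =>
    exact summable_of_finite_support (Set.Finite.subset (Set.finite_univ) (by simp))
  | succ m ih =>
    have base : Summable (fun n : ℕ => (1:ℝ) / (n:ℝ) ^ p) :=
      Real.summable_one_div_nat_pow.mpr (by omega)
    have hmul := Summable.mul_of_nonneg base ih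
      (fun n => by positivity) (fun f => Finset.prod_nonneg fun i _ => by positivity)
    have hcomp : Summable ((fun f : Fin (m+1) → ℕ => ∏ i, (1:ℝ) / (f i : ℝ) ^ p)
        ∘ (Fin.consEquiv fun _ => ℕ)) := by
      refine hmul.congr fun x => ?_
      simp [Fin.consEquiv, Fin.prod_univ_succ, mul_comm]
    exact (Fin.consEquiv _).summable_iff.mp hcomp

lemma summable_D (p : ℕ) (hp : 2 ≤ p) (m : ℕ) :
    Summable (fun f : D m => ∏ i, (1:ℝ) / (f.1 i : ℝ) ^ p) :=
  (summable_pi p hp m).subtype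
    {f : Fin m → ℕ | (∀ i j : Fin m, i < j → f j ≤ f i) ∧ ∀ i, 1 ≤ f i}

lemma decSet_mono {m : ℕ} : Monotone (fun N => decSet N m) := by
  intro N N' h f hf
  rw [mem_decSet] at hf ⊢
  exact ⟨fun i => ⟨(hf.1 i).1, (hf.1 i).2.trans h⟩, hf.2⟩

open Filter in
lemma tendsto_T (p : ℕ) (hp : 2 ≤ p) (m : ℕ) :
    Tendsto (fun N => T p N m) atTop
      (nhds (∑' f : D m, ∏ i, (1:ℝ) / (f.1 i : ℝ) ^ p)) := by
  classical
  have hsum := summable_D p hp m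
  have hhas := hsum.hasSum
  set P : (Fin m → ℕ) → Prop :=
    fun f => (∀ i j : Fin m, i < j → f j ≤ f i) ∧ ∀ i, 1 ≤ f i with hP
  set S : ℕ → Finset (D m) := fun N => (decSet N m).subtype P with hS
  have hmono : Monotone S := by
    intro N N' h f hf
    simp only [hS, Finset.mem_subtype] at hf ⊢
    exact decSet_mono h hf
  have hex : ∀ f : D m, ∃ N, f ∈ S N := by
    intro f
    refine ⟨Finset.univ.sup f.1, ?_⟩
    simp only [hS, Finset.mem_subtype, mem_decSet]
    exact ⟨fun i => ⟨f.2.2 i, Finset.le_sup (Finset.mem_univ i)⟩, f.2.1⟩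
  have htend : Tendsto S atTop atTop := tendsto_atTop_finset_of_monotone hmono hex
  have hcomp := hhas.comp htend
  refine hcomp.congr fun N => ?_
  show ∑ f ∈ S N, (∏ i, (1:ℝ) / ((f:Fin m → ℕ) i : ℝ) ^ p) = T p N m
  rw [hS]
  rw [Finset.sum_subtype_eq_sum_filter (fun f : Fin m → ℕ => ∏ i, (1:ℝ) / (f i : ℝ) ^ p)]
  rw [T]
  refine Finset.sum_congr ?_ fun _ _ => rfl
  refine Finset.filter_true_of_mem fun f hf => ?_
  rw [mem_decSet] at hf
  exact ⟨hf.2, fun i => (hf.1 i).1⟩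

open Filter in
theorem mzvStar_alternating_aux (p k : ℕ) (hp : 2 ≤ p) (hk : Even k) :
    ∑ mn ∈ Finset.HasAntidiagonal.antidiagonal k,
        (-1 : ℝ) ^ mn.1 * mzvStar (List.replicate mn.1 p) *
          mzvStar (List.replicate mn.2 p) =
      mzvStar (List.replicate (k / 2) (2 * p)) := by
  obtain ⟨j, rfl⟩ := hk
  have hj : (j + j) / 2 = j := by omega
  rw [hj]
  have h2p : 2 ≤ 2 * p := by omega
  have hL : ∀ m, Tendsto (fun N => T p N m) atTop (nhds (mzvStar (List.replicate m p))) := by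
    intro m; rw [mzvStar_replicate]; exact tendsto_T p hp m
  have hR : Tendsto (fun N => T (2*p) N j) atTop (nhds (mzvStar (List.replicate j (2*p)))) := by
    rw [mzvStar_replicate]; exact tendsto_T (2*p) h2p j
  have hconv : Tendsto (fun N => conv (T p N) (T p N) (j+j)) atTop
      (nhds (∑ mn ∈ Finset.HasAntidiagonal.antidiagonal (j+j),
        (-1 : ℝ) ^ mn.1 * mzvStar (List.replicate mn.1 p) *
          mzvStar (List.replicate mn.2 p))) := by
    rw [Nat.sum_antidiagonal_eq_sum_range_succ_mk]
    simp only [conv]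
    refine tendsto_finset_sum _ fun m hm => ?_
    exact (((hL m).const_mul ((-1:ℝ)^m)).mul (hL (j+j-m)))
  have hconv2 : ∀ N, conv (T p N) (T p N) (j+j) = T (2*p) N j := by
    intro N
    have h : j + j = 2*j := by omega
    rw [h, conv_T]
  simp only [hconv2] at hconv
  exact tendsto_nhds_unique hconv hR

/-- for p ≥ 2 and even k ≥ 0,
`Σ_{m+n=k} (-1)^m ζ*({p}^m) ζ*({p}^n) = ζ*({2p}^{k/2})`. -/
theorem mzvStar_alternating (p k : ℕ) (hp : 2 ≤ p) (hk : Even k) :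
    ∑ mn ∈ Finset.HasAntidiagonal.antidiagonal k,
        (-1 : ℝ) ^ mn.1 * mzvStar (List.replicate mn.1 p) *
          mzvStar (List.replicate mn.2 p) =
      mzvStar (List.replicate (k / 2) (2 * p)) :=
  mzvStar_alternating_aux p k hp hk
end
end
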